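/- The function Y (Yoccoz–Brjuno function) restricted to any nonempty open interval of ℝ is unbounded above. -/

import Mathlib

open scoped ENNReal
open Classical

/-- The Gauss-map iterates of `θ`: `θ_0 = {θ}`, `θ_{n+1} = {1/θ_n}`. -/
noncomputable def gaussIter (θ : ℝ) : ℕ → ℝ
  | 0 => Int.fract θ
  | n + 1 => Int.fract (1 / gaussIter θ n)

/-- Yoccoz's Brjuno function `Y(θ) = ∑ θ_0⋯θ_{n-1} log(1/θ_n) ∈ (0, ∞]` for irrational
`θ`, and `Y(θ) = ∞` for rational `θ`. -/
noncomputable def brjunoY (θ : ℝ) : ℝ≥0∞ :=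
  if Irrational θ then
    ∑' n : ℕ,
      ENNReal.ofReal ((∏ i ∈ Finset.range n, gaussIter θ i) * Real.log (1 / gaussIter θ n))
  else ⊤

/-!
Write `w ∈ (a, b)` irrational as `⌊w⌋ + [0; a₁, a₂, …]`. Every number
`⌊w⌋ + [0; a₁, …, a₂ₙ, K, 1, 1, 1, …]` lies within `4⁻ⁿ` of `w`, because two consecutive inverse
branches of the Gauss map contract by `4`. Its golden-mean tail keeps `Y` finite, and by Yoccoz's
functional equation `Y(x) = -log x + x Y(1/x)` (for `0 < x < 1`) the partial quotient `K`
contributes at least `∏ᵢ (aᵢ + 1)⁻¹ · log K` to `Y`, which is unbounded in `K`.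
-/

open Set ENNReal Real
open scoped goldenRatio

lemma Irrational.fract {x : ℝ} (hx : Irrational x) : Irrational (Int.fract x) :=
  hx.sub_intCast _

lemma gaussIter_succ' (θ : ℝ) (n : ℕ) :
    gaussIter θ (n + 1) = gaussIter (1 / Int.fract θ) n := by
  induction n with
  | zero => simp [gaussIter]
  | succ n ih => rw [gaussIter, ih, gaussIter]

lemma gaussIter_intCast_add (m : ℤ) (θ : ℝ) (n : ℕ) : gaussIter (m + θ) n = gaussIter θ n := by
  induction n with
  | zero => simp [gaussIter]
  | succ n ih => rw [gaussIter, ih, gaussIter]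

lemma brjunoY_intCast_add (m : ℤ) (θ : ℝ) : brjunoY (m + θ) = brjunoY θ := by
  simp only [brjunoY, irrational_intCast_add_iff, gaussIter_intCast_add]

lemma brjunoY_natCast_add (k : ℕ) (θ : ℝ) : brjunoY (k + θ) = brjunoY θ := by
  exact_mod_cast brjunoY_intCast_add k θ

lemma brjunoY_eq_of_irrational {θ : ℝ} (hθ : Irrational θ) :
    brjunoY θ = ENNReal.ofReal (Real.log (1 / Int.fract θ)) +
      ENNReal.ofReal (Int.fract θ) * brjunoY (1 / Int.fract θ) := by
  rw [brjunoY, if_pos hθ, brjunoY, if_pos (by rw [one_div]; exact hθ.fract.inv),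
    tsum_eq_zero_add' ENNReal.summable, ← ENNReal.tsum_mul_left]
  refine congrArg₂ _ (by simp [gaussIter]) (tsum_congr fun n => ?_)
  rw [Finset.prod_range_succ', ← ENNReal.ofReal_mul (Int.fract_nonneg θ)]
  simp only [gaussIter_succ']
  congr 1
  rw [gaussIter]
  ring

/-- `cylinderMap [a₁, …, aₙ] y = [0; a₁, …, aₙ + y]`: it maps `(0, 1)` onto the cylinder of
numbers whose first `n` partial quotients are `a₁, …, aₙ`. -/
noncomputable def cylinderMap (D : List ℕ+) (y : ℝ) : ℝ :=
  D.foldr (fun k x => 1 / (k + x)) y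

@[simp]
lemma cylinderMap_nil (y : ℝ) : cylinderMap [] y = y := rfl

@[simp]
lemma cylinderMap_cons (k : ℕ+) (D : List ℕ+) (y : ℝ) :
    cylinderMap (k :: D) y = 1 / (k + cylinderMap D y) := rfl

lemma one_div_pnat_add_mem_Ioo (k : ℕ+) {x : ℝ} (hx : x ∈ Ioo 0 1) :
    1 / (k + x) ∈ Ioo (0 : ℝ) 1 := by
  have hk : (1 : ℝ) ≤ k := by exact_mod_cast k.pos
  exact ⟨by have := hx.1; positivity, by rw [div_lt_one (by linarith [hx.1])]; linarith [hx.1]⟩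

lemma cylinderMap_mem_Ioo (D : List ℕ+) {y : ℝ} (hy : y ∈ Ioo 0 1) :
    cylinderMap D y ∈ Ioo 0 1 := by
  induction D with
  | nil => exact hy
  | cons k D ih => exact one_div_pnat_add_mem_Ioo k ih

lemma Irrational.cylinderMap (D : List ℕ+) {y : ℝ} (hy : Irrational y) :
    Irrational (cylinderMap D y) := by
  induction D with
  | nil => exact hy
  | cons k D ih => rw [cylinderMap_cons, one_div]; exact (ih.natCast_add k).inv

lemma brjunoY_one_div_pnat_add (k : ℕ+) {y : ℝ} (hy : y ∈ Ioo 0 1) (hirr : Irrational y) :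
    brjunoY (1 / (k + y)) =
      ENNReal.ofReal (Real.log (k + y)) + ENNReal.ofReal (1 / (k + y)) * brjunoY y := by
  have hmem := one_div_pnat_add_mem_Ioo k hy
  rw [brjunoY_eq_of_irrational (by rw [one_div]; exact (hirr.natCast_add k).inv),
    Int.fract_eq_self.2 ⟨hmem.1.le, hmem.2⟩, one_div_one_div, brjunoY_natCast_add]

lemma brjunoY_cylinderMap_ne_top (D : List ℕ+) {y : ℝ} (hy : y ∈ Ioo 0 1)
    (hirr : Irrational y) (hY : brjunoY y ≠ ⊤) : brjunoY (cylinderMap D y) ≠ ⊤ := by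
  induction D with
  | nil => exact hY
  | cons k D ih =>
    rw [cylinderMap_cons, brjunoY_one_div_pnat_add k (cylinderMap_mem_Ioo D hy)
      (hirr.cylinderMap D)]
    exact add_ne_top.2 ⟨ofReal_ne_top, mul_ne_top ofReal_ne_top ih⟩

lemma exists_pos_mul_brjunoY_le_brjunoY_cylinderMap (D : List ℕ+) :
    ∃ c : ℝ, 0 < c ∧ ∀ y ∈ Ioo 0 1, Irrational y →
      ENNReal.ofReal c * brjunoY y ≤ brjunoY (cylinderMap D y) := by
  induction D with
  | nil => exact ⟨1, one_pos, fun y _ _ => by simp⟩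
  | cons k D ih =>
    obtain ⟨c, hc, hcD⟩ := ih
    refine ⟨1 / (k + 1) * c, mul_pos (by positivity) hc, fun y hy hirr => ?_⟩
    have hx := cylinderMap_mem_Ioo D hy
    have hkx : 1 / ((k : ℝ) + 1) ≤ 1 / (k + cylinderMap D y) :=
      one_div_le_one_div_of_le (by have := hx.1; positivity) (by linarith [hx.2])
    calc ENNReal.ofReal (1 / (k + 1) * c) * brjunoY y
        = ENNReal.ofReal (1 / (k + 1)) * (ENNReal.ofReal c * brjunoY y) := by
          rw [ENNReal.ofReal_mul (by positivity), mul_assoc]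
      _ ≤ ENNReal.ofReal (1 / (k + cylinderMap D y)) * brjunoY (cylinderMap D y) := by
          gcongr
          exact hcD y hy hirr
      _ ≤ brjunoY (cylinderMap (k :: D) y) := by
          rw [cylinderMap_cons, brjunoY_one_div_pnat_add k hx (hirr.cylinderMap D)]
          exact le_add_self

lemma ofReal_log_le_brjunoY_cylinderMap_singleton (k : ℕ+) {y : ℝ} (hy : y ∈ Ioo 0 1)
    (hirr : Irrational y) : ENNReal.ofReal (Real.log k) ≤ brjunoY (cylinderMap [k] y) := by
  rw [cylinderMap_cons, cylinderMap_nil, brjunoY_one_div_pnat_add k hy hirr]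
  refine le_trans ?_ le_self_add
  gcongr
  linarith [hy.1]

/-- A single inverse branch `x ↦ 1 / (a + x)` of the Gauss map need not contract (take `a = 1`
near `x = 0`), but two consecutive ones do. -/
lemma abs_one_div_add_one_div_add_sub_le {a b x y : ℝ} (ha : 1 ≤ a) (hb : 1 ≤ b)
    (hx : 0 ≤ x) (hy : 0 ≤ y) :
    |1 / (a + 1 / (b + x)) - 1 / (a + 1 / (b + y))| ≤ |x - y| / 4 := by
  have hx' : 2 ≤ a * (b + x) + 1 := by nlinarith
  have hy' : 2 ≤ a * (b + y) + 1 := by nlinarith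
  have key : 1 / (a + 1 / (b + x)) - 1 / (a + 1 / (b + y)) =
      (x - y) / ((a * (b + x) + 1) * (a * (b + y) + 1)) := by
    field_simp
    ring
  rw [key, abs_div, abs_of_pos (a := (a * (b + x) + 1) * (a * (b + y) + 1)) (by positivity)]
  exact div_le_div_of_nonneg_left (abs_nonneg _) (by norm_num) (by nlinarith)

lemma exists_eq_one_div_pnat_add {w : ℝ} (hw : w ∈ Ioo 0 1) (hirr : Irrational w) :
    ∃ k : ℕ+, ∃ w' ∈ Ioo (0 : ℝ) 1, Irrational w' ∧ w = 1 / (k + w') := by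
  have hinv : 1 < 1 / w := by rw [lt_div_iff₀ hw.1]; linarith [hw.2]
  have hirr' : Irrational (1 / w) := by rw [one_div]; exact hirr.inv
  refine ⟨⟨⌊1 / w⌋₊, Nat.floor_pos.2 hinv.le⟩, 1 / w - ⌊1 / w⌋₊, ⟨?_, ?_⟩, hirr'.sub_natCast _, ?_⟩
  · exact sub_pos.2 ((Nat.floor_le (by linarith)).lt_of_ne (hirr'.ne_nat _).symm)
  · linarith [Nat.lt_floor_add_one (1 / w)]
  · simp

lemma exists_cylinderMap_abs_sub_le (n : ℕ) {w : ℝ} (hw : w ∈ Ioo 0 1) (hirr : Irrational w) :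
    ∃ D : List ℕ+, ∀ y ∈ Ioo (0 : ℝ) 1, |cylinderMap D y - w| ≤ (1 / 4) ^ n := by
  induction n generalizing w with
  | zero =>
    refine ⟨[], fun y hy => ?_⟩
    rw [pow_zero, cylinderMap_nil, abs_le]
    constructor <;> linarith [hy.1, hy.2, hw.1, hw.2]
  | succ n ih =>
    obtain ⟨a, w', hw', hirr', rfl⟩ := exists_eq_one_div_pnat_add hw hirr
    obtain ⟨b, w'', hw'', hirr'', rfl⟩ := exists_eq_one_div_pnat_add hw' hirr'
    obtain ⟨D, hD⟩ := ih hw'' hirr''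
    refine ⟨a :: b :: D, fun y hy => ?_⟩
    calc |cylinderMap (a :: b :: D) y - 1 / (a + 1 / (b + w''))|
        ≤ |cylinderMap D y - w''| / 4 :=
          abs_one_div_add_one_div_add_sub_le (mod_cast a.pos) (mod_cast b.pos)
            (cylinderMap_mem_Ioo D hy).1.le hw''.1.le
      _ ≤ (1 / 4) ^ (n + 1) := by rw [pow_succ]; linarith [hD y hy]

lemma goldenRatio_inv_mem_Ioo : φ⁻¹ ∈ Ioo (0 : ℝ) 1 :=
  ⟨inv_pos.2 goldenRatio_pos, inv_lt_one_of_one_lt₀ one_lt_goldenRatio⟩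

lemma gaussIter_goldenRatio_inv (n : ℕ) : gaussIter φ⁻¹ n = φ⁻¹ := by
  have hfract : Int.fract φ⁻¹ = φ⁻¹ :=
    Int.fract_eq_self.2 ⟨goldenRatio_inv_mem_Ioo.1.le, goldenRatio_inv_mem_Ioo.2⟩
  have hfract' : Int.fract φ = φ⁻¹ := by
    have hφ : φ = φ⁻¹ + 1 := by rw [inv_goldenRatio, ← one_sub_goldenConj]; ring
    nth_rw 1 [hφ]
    rw [Int.fract_add_one, hfract]
  induction n with
  | zero => exact hfract
  | succ n ih => rw [gaussIter, ih, one_div, inv_inv, hfract']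

lemma brjunoY_goldenRatio_inv_ne_top : brjunoY φ⁻¹ ≠ ⊤ := by
  have hφ : 0 ≤ Real.log φ := Real.log_nonneg one_lt_goldenRatio.le
  rw [brjunoY, if_pos goldenRatio_irrational.inv]
  simp only [gaussIter_goldenRatio_inv, Finset.prod_const, Finset.card_range, one_div, inv_inv]
  rw [← ENNReal.ofReal_tsum_of_nonneg (fun n => by have := goldenRatio_inv_mem_Ioo.1; positivity)
    ((summable_geometric_of_lt_one goldenRatio_inv_mem_Ioo.1.le goldenRatio_inv_mem_Ioo.2).mul_right _)]
  exact ofReal_ne_top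

lemma exists_brjunoY_ne_top_ofReal_lt_mul {c : ℝ} (hc : 0 < c) (M : ℝ) :
    ∃ y ∈ Ioo (0 : ℝ) 1, Irrational y ∧ brjunoY y ≠ ⊤ ∧
      ENNReal.ofReal M < ENNReal.ofReal c * brjunoY y := by
  obtain ⟨N, hN⟩ := exists_nat_gt (Real.exp (|M| / c))
  have hM : |M| < c * Real.log N.succPNat := by
    rw [← div_lt_iff₀' hc, Real.lt_log_iff_exp_lt (by positivity)]
    simpa using hN.trans (lt_add_one _)
  refine ⟨cylinderMap [N.succPNat] φ⁻¹, cylinderMap_mem_Ioo _ goldenRatio_inv_mem_Ioo,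
    goldenRatio_irrational.inv.cylinderMap _, brjunoY_cylinderMap_ne_top _ goldenRatio_inv_mem_Ioo
      goldenRatio_irrational.inv brjunoY_goldenRatio_inv_ne_top, ?_⟩
  calc ENNReal.ofReal M ≤ ENNReal.ofReal |M| := ENNReal.ofReal_le_ofReal (le_abs_self M)
    _ < ENNReal.ofReal c * ENNReal.ofReal (Real.log N.succPNat) := by
        rw [← ENNReal.ofReal_mul hc.le, ENNReal.ofReal_lt_ofReal_iff ((abs_nonneg M).trans_lt hM)]
        exact hM
    _ ≤ ENNReal.ofReal c * brjunoY (cylinderMap [N.succPNat] φ⁻¹) := by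
        gcongr
        exact ofReal_log_le_brjunoY_cylinderMap_singleton _ goldenRatio_inv_mem_Ioo
          goldenRatio_irrational.inv

lemma exists_brjunoY_ne_top_ofReal_lt_near {w : ℝ} (hw : w ∈ Ioo 0 1) (hirr : Irrational w)
    {ε : ℝ} (hε : 0 < ε) (M : ℝ) :
    ∃ θ, |θ - w| < ε ∧ Irrational θ ∧ brjunoY θ ≠ ⊤ ∧ ENNReal.ofReal M < brjunoY θ := by
  obtain ⟨n, hn⟩ := exists_pow_lt_of_lt_one hε (by norm_num : (1 / 4 : ℝ) < 1)
  obtain ⟨D, hD⟩ := exists_cylinderMap_abs_sub_le n hw hirr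
  obtain ⟨c, hc, hcD⟩ := exists_pos_mul_brjunoY_le_brjunoY_cylinderMap D
  obtain ⟨y, hy, hyirr, hyY, hMy⟩ := exists_brjunoY_ne_top_ofReal_lt_mul hc M
  exact ⟨cylinderMap D y, (hD y hy).trans_lt hn, hyirr.cylinderMap D,
    brjunoY_cylinderMap_ne_top D hy hyirr hyY, hMy.trans_le (hcD y hy hyirr)⟩

/-- The Yoccoz–Brjuno function is unbounded above on every nonempty open interval,
even when restricted to Brjuno numbers (points where it is finite). -/
theorem brjunoY_unbounded_on_intervals :
    ∀ a b : ℝ, a < b → ∀ M : ℝ, ∃ θ : ℝ, a < θ ∧ θ < b ∧ Irrational θ ∧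
      brjunoY θ ≠ ⊤ ∧ ENNReal.ofReal M < brjunoY θ := by
  intro a b hab M
  obtain ⟨w, hw, haw, hwb⟩ := exists_irrational_btwn hab
  have hfract : Int.fract w ∈ Ioo 0 1 :=
    ⟨(Int.fract_nonneg w).lt_of_ne hw.fract.ne_zero.symm, Int.fract_lt_one w⟩
  obtain ⟨θ, hθw, hθ, hθY, hMθ⟩ := exists_brjunoY_ne_top_ofReal_lt_near hfract hw.fract
    (lt_min (sub_pos.2 haw) (sub_pos.2 hwb)) M
  have hθw' := abs_sub_lt_iff.1 hθw
  have hw' := Int.floor_add_fract w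
  refine ⟨⌊w⌋ + θ, by linarith [min_le_left (w - a) (b - w)],
    by linarith [min_le_right (w - a) (b - w)], hθ.intCast_add _, ?_, ?_⟩ <;>
  rwa [brjunoY_intCast_add]
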